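/- arXiv:2501.16208 — 4 statements merged into one kernel-verified Lean document; each statement's English description precedes it below -/
import Mathlib

section
/- Soundness of the Dialectica right conditional rule (cond_R): Let X, Y, U, V, W, Z be types, P : X → Y → Prop with P x y decidable for all x, y, Q : U → V → Prop, R : W → Z → Prop. Suppose the Dialectica triple P ⟨a|α⟩ Q holds for a : X → U, α : X → V → Y, and the Dialectica triple P ⟨b|β⟩ R holds for b : X → W, β : X → Z → Y. Define γ : X → V → Z → Y by γ x v w = if P x (α x v) then β x w else α x v. Then for all x : X, v : V, w : Z, P x (γ x v w) implies Q (a x) v ∧ R (b x) w. -/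
theorem and_of_apply_ite_self {Y : Type*} {S : Y → Prop} {y y' : Y} [Decidable (S y)]
    (h : S (if S y then y' else y)) : S y ∧ S y' := by
  split_ifs at h with hy
  · exact ⟨hy, h⟩
  · exact absurd h hy

/-- Soundness of the Dialectica right conditional rule (cond_R). -/
theorem dialectica_cond_R {X Y U V W Z : Type*}
    (P : X → Y → Prop) [∀ x y, Decidable (P x y)]
    (Q : U → V → Prop) (R : W → Z → Prop)
    (a : X → U) (α : X → V → Y) (b : X → W) (β : X → Z → Y)
    (h₁ : ∀ x v, P x (α x v) → Q (a x) v)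
    (h₂ : ∀ x w, P x (β x w) → R (b x) w)
    (γ : X → V → Z → Y)
    (hγ : ∀ x v w, γ x v w = if P x (α x v) then β x w else α x v) :
    ∀ (x : X) (v : V) (w : Z), P x (γ x v w) → Q (a x) v ∧ R (b x) w := by
  intro x v w h
  rw [hγ] at h
  obtain ⟨hα, hβ⟩ := and_of_apply_ite_self h
  exact ⟨h₁ x v hα, h₂ x w hβ⟩
end

section
/- Soundness of the Dialectica induction rule (ind): Let X, Y be types, P : ℕ → X → Y → Prop, a : ℕ → X → X, α : ℕ → X → Y → Y. Suppose that for every n : ℕ, the Dialectica triple P n ⟨a n | α n⟩ P (n+1) holds, i.e. for all x : X and v : Y, P n x (α n x v) implies P (n+1) (a n x) v. Define the forward iterate b : X → ℕ → X by b y 0 = y and b y (n+1) = a n (b y n); and for fixed y : X, n : ℕ, v : Y define the backward sequence β : ℕ → Y by β 0 = v and β (z+1) = α (n - z - 1) (b y (n - z - 1)) (β z). Then for all y : X, n : ℕ, v : Y: P 0 y (β n) implies P n (b y n) v. -/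
/-!
Read backwards, `β (n - m)` is the counterwitness at stage `m`: the Dialectica triple for step `m`
turns `P m (b y m) (β (n - m))` into `P (m + 1) (b y (m + 1)) (β (n - (m + 1)))`, so an ordinary
induction on `m` carries the hypothesis on `P 0` up to `P n`.
-/

theorem reverse_recursion_sub_of_lt {Y : Type*} {n m : ℕ} {c : ℕ → Y → Y} {β : ℕ → Y}
    (hs : ∀ z, β (z + 1) = c (n - z - 1) (β z)) (hm : m < n) :
    β (n - m) = c m (β (n - (m + 1))) := by
  obtain ⟨k, hk⟩ : ∃ k, n - m = k + 1 := ⟨n - (m + 1), by omega⟩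
  rw [hk, hs, show n - k - 1 = m by omega, show n - (m + 1) = k by omega]

theorem dialectica_ind_invariant {X Y : Type*}
    (P : ℕ → X → Y → Prop) (a : ℕ → X → X) (α : ℕ → X → Y → Y)
    (hstep : ∀ (n : ℕ) (x : X) (v : Y), P n x (α n x v) → P (n + 1) (a n x) v)
    (b : X → ℕ → X) (hb0 : ∀ y, b y 0 = y) (hbs : ∀ y n, b y (n + 1) = a n (b y n))
    {y : X} {n : ℕ} {β : ℕ → Y}
    (hs : ∀ z, β (z + 1) = α (n - z - 1) (b y (n - z - 1)) (β z))
    (h : P 0 y (β n)) :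
    ∀ m ≤ n, P m (b y m) (β (n - m)) := by
  intro m
  induction m with
  | zero => intro _; simpa [hb0] using h
  | succ m ih =>
    intro hm
    have hprev := ih (by omega)
    rw [reverse_recursion_sub_of_lt (c := fun k => α k (b y k)) hs (by omega)] at hprev
    rw [hbs]
    exact hstep m _ _ hprev

/-- Soundness of the Dialectica induction rule (ind): the forward iterate `b`
realizes the System T recursor applied to the step functions `a n`, and the
backward sequence `β` realizes the backward recursor `rec*`. -/
theorem dialectica_ind {X Y : Type*}
    (P : ℕ → X → Y → Prop) (a : ℕ → X → X) (α : ℕ → X → Y → Y)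
    (hstep : ∀ (n : ℕ) (x : X) (v : Y), P n x (α n x v) → P (n + 1) (a n x) v)
    (b : X → ℕ → X)
    (hb0 : ∀ y, b y 0 = y)
    (hbs : ∀ y n, b y (n + 1) = a n (b y n)) :
    ∀ (y : X) (n : ℕ) (v : Y) (β : ℕ → Y),
      β 0 = v →
      (∀ z, β (z + 1) = α (n - z - 1) (b y (n - z - 1)) (β z)) →
      P 0 y (β n) → P n (b y n) v := by
  intro y n v β h0 hs h
  simpa [h0] using dialectica_ind_invariant P a α hstep b hb0 hbs hs h n le_rfl
end

section
/- Soundness of the Dialectica while rule (Theorem 6, W_≺): Let X, V be types, r a well-founded relation on X, φ : X → Prop a decidable predicate, a : X → X such that for all x, φ x implies r (a x) x, α : X → V → V, and P : X → V → Prop. Define whileDo : X → X and whileBack : X → V → V by well-founded recursion as whileDo x = if φ x then whileDo (a x) else x and whileBack x v = if φ x then α x (whileBack (a x) v) else v. Suppose that for all x : X and v : V, if P x (α x v) and φ x then P (a x) v. Then for all x : X and v : V: P x (whileBack x v) implies P (whileDo x) v ∧ ¬ φ (whileDo x). -/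
/-- The forward while operator, defined by well-founded recursion on `r`. -/
noncomputable def whileDo {X : Type*} (r : X → X → Prop) (hwf : WellFounded r)
    (φ : X → Prop) [DecidablePred φ] (a : X → X) (hdesc : ∀ x, φ x → r (a x) x) :
    X → X :=
  hwf.fix (fun x ih => if hx : φ x then ih (a x) (hdesc x hx) else x)

/-- The backward while operator, defined by well-founded recursion on `r` in its
first argument. -/
noncomputable def whileBack {X V : Type*} (r : X → X → Prop) (hwf : WellFounded r)
    (φ : X → Prop) [DecidablePred φ] (a : X → X) (hdesc : ∀ x, φ x → r (a x) x)
    (α : X → V → V) : X → V → V :=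
  hwf.fix (fun x ih v => if hx : φ x then α x (ih (a x) (hdesc x hx) v) else v)

section Unfolding

variable {X V : Type*} {r : X → X → Prop} {hwf : WellFounded r} {φ : X → Prop}
  [DecidablePred φ] {a : X → X} {hdesc : ∀ x, φ x → r (a x) x} {x : X}

theorem whileDo_of_pos (hx : φ x) :
    whileDo r hwf φ a hdesc x = whileDo r hwf φ a hdesc (a x) := by
  rw [whileDo, hwf.fix_eq, dif_pos hx]

theorem whileDo_of_neg (hx : ¬ φ x) : whileDo r hwf φ a hdesc x = x := by
  rw [whileDo, hwf.fix_eq, dif_neg hx]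

variable {α : X → V → V} {v : V}

theorem whileBack_of_pos (hx : φ x) :
    whileBack r hwf φ a hdesc α x v = α x (whileBack r hwf φ a hdesc α (a x) v) := by
  rw [whileBack, hwf.fix_eq, dif_pos hx]

theorem whileBack_of_neg (hx : ¬ φ x) : whileBack r hwf φ a hdesc α x v = v := by
  rw [whileBack, hwf.fix_eq, dif_neg hx]

end Unfolding

/-- Soundness of the Dialectica while rule (Theorem 6, W_≺). -/
theorem dialectica_while_sound {X V : Type*} (r : X → X → Prop) (hwf : WellFounded r)
    (φ : X → Prop) [DecidablePred φ] (a : X → X) (hdesc : ∀ x, φ x → r (a x) x)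
    (α : X → V → V) (P : X → V → Prop)
    (h : ∀ (x : X) (v : V), P x (α x v) → φ x → P (a x) v) :
    ∀ (x : X) (v : V),
      P x (whileBack r hwf φ a hdesc α x v) →
        P (whileDo r hwf φ a hdesc x) v ∧ ¬ φ (whileDo r hwf φ a hdesc x) := by
  intro x
  induction x using hwf.induction with
  | _ x ih =>
    intro v hP
    by_cases hx : φ x
    · rw [whileBack_of_pos hx] at hP
      rw [whileDo_of_pos hx]
      exact ih (a x) (hdesc x hx) v (h x _ hP hx)
    · rw [whileBack_of_neg hx] at hP
      rw [whileDo_of_neg hx]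
      exact ⟨hP, hx⟩
end

section
/- Soundness of the operational semantics of LOOP_D with respect to its denotational semantics (Theorem 8): Let S and T be types. For every LOOP_D command C over S and T (built from skip, primitive pairs ⟨c,γ⟩, sequencing, decidable conditionals, and while loops over well-founded decidable relations subject to the descent restriction) and every state s : S, there exist s' : S, σ : List S and Γ : List (S → T → T) such that the forward big-step judgment ⟨s, C⟩ ⇓ (s', σ, Γ) is derivable and s' = C⁺ s; moreover, for every t : T and every σ₀ : List S, Γ₀ : List (S → T → T), there exists t' : T such that the backward judgment (σ ++ σ₀, Γ ++ Γ₀, t) ⇒ (σ₀, Γ₀, t') is derivable and t' = C⁻ s t. -/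
open scoped Classical

/-- Commands of the language LOOP_D over state types `S` and `T`: skip,
primitive pairs `⟨c,γ⟩`, sequencing, decidable conditionals, and while loops
over well-founded decidable relations. -/
inductive Cmd (S T : Type*) where
  | skip : Cmd S T
  | prim : (S → S) → (S → T → T) → Cmd S T
  | seq : Cmd S T → Cmd S T → Cmd S T
  | cond : (φ : S → Prop) → DecidablePred φ → Cmd S T → Cmd S T → Cmd S T
  | wh : (r : S → S → Prop) → WellFounded r → (φ : S → Prop) → DecidablePred φ →
      Cmd S T → Cmd S T

/-- The forward denotation `C⁺ : S → S`.  The while case is defined by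
well-founded recursion, recursing as long as both the loop condition holds and
the body makes `r`-descent (under the descent restriction on while formation
this agrees with `s ↦ if φ s then (while)⁺ (C₁⁺ s) else s`). -/
noncomputable def Cmd.fwd {S T : Type*} : Cmd S T → S → S
  | .skip => fun s => s
  | .prim c _ => c
  | .seq C₁ C₂ => fun s => C₂.fwd (C₁.fwd s)
  | .cond φ dec C₁ C₂ => fun s => @ite _ (φ s) (dec s) (C₁.fwd s) (C₂.fwd s)
  | .wh _r hwf φ dec C₁ =>
      hwf.fix (fun s ih =>
        if h : φ s ∧ _r (C₁.fwd s) s then ih (C₁.fwd s) h.2 else s)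

/-- The backward denotation `C⁻ : S → T → T`. -/
noncomputable def Cmd.bwd {S T : Type*} : Cmd S T → S → T → T
  | .skip => fun _ t => t
  | .prim _ γ => γ
  | .seq C₁ C₂ => fun s t => C₁.bwd s (C₂.bwd (C₁.fwd s) t)
  | .cond φ dec C₁ C₂ => fun s t => @ite _ (φ s) (dec s) (C₁.bwd s t) (C₂.bwd s t)
  | .wh _r hwf φ dec C₁ =>
      hwf.fix (fun s ih t =>
        if h : φ s ∧ _r (C₁.fwd s) s then C₁.bwd s (ih (C₁.fwd s) h.2 t) else t)

/-- Well-formed commands: while formation is only allowed when for all `s`,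
`φ s` implies `r (C₁⁺ s) s` (the descent restriction). -/
inductive Cmd.WF {S T : Type*} : Cmd S T → Prop
  | skip : Cmd.WF .skip
  | prim (c : S → S) (γ : S → T → T) : Cmd.WF (.prim c γ)
  | seq {C₁ C₂ : Cmd S T} : C₁.WF → C₂.WF → (Cmd.seq C₁ C₂).WF
  | cond {φ : S → Prop} {dec : DecidablePred φ} {C₁ C₂ : Cmd S T} :
      C₁.WF → C₂.WF → (Cmd.cond φ dec C₁ C₂).WF
  | wh {r : S → S → Prop} {hwf : WellFounded r} {φ : S → Prop}
      {dec : DecidablePred φ} {C₁ : Cmd S T} :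
      C₁.WF → (∀ s, φ s → r (C₁.fwd s) s) → (Cmd.wh r hwf φ dec C₁).WF

/-- The forward big-step judgment `⟨s, C⟩ ⇓ (s', σ, Γ)`, where `σ` and `Γ` are
the stacks of intermediate states and backward commands pushed during the run. -/
inductive Big {S T : Type*} :
    S → Cmd S T → S → List S → List (S → T → T) → Prop
  | skip (s : S) : Big s .skip s [] []
  | prim (s : S) (c : S → S) (γ : S → T → T) : Big s (.prim c γ) (c s) [s] [γ]
  | seq {s s' s'' : S} {C₁ C₂ : Cmd S T} {σ σ' : List S}
      {Γ Γ' : List (S → T → T)} :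
      Big s C₁ s' σ Γ → Big s' C₂ s'' σ' Γ' →
      Big s (.seq C₁ C₂) s'' (σ' ++ σ) (Γ' ++ Γ)
  | cond_true {φ : S → Prop} {dec : DecidablePred φ} {C₁ C₂ : Cmd S T}
      {s s' : S} {σ : List S} {Γ : List (S → T → T)} :
      φ s → Big s C₁ s' σ Γ → Big s (.cond φ dec C₁ C₂) s' σ Γ
  | cond_false {φ : S → Prop} {dec : DecidablePred φ} {C₁ C₂ : Cmd S T}
      {s s' : S} {σ : List S} {Γ : List (S → T → T)} :
      ¬ φ s → Big s C₂ s' σ Γ → Big s (.cond φ dec C₁ C₂) s' σ Γ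
  | wh_true {r : S → S → Prop} {hwf : WellFounded r} {φ : S → Prop}
      {dec : DecidablePred φ} {C₁ : Cmd S T} {s s' s'' : S} {σ σ' : List S}
      {Γ Γ' : List (S → T → T)} :
      φ s → Big s C₁ s' σ Γ → r s' s →
      Big s' (.wh r hwf φ dec C₁) s'' σ' Γ' →
      Big s (.wh r hwf φ dec C₁) s'' (σ' ++ σ) (Γ' ++ Γ)
  | wh_false {r : S → S → Prop} {hwf : WellFounded r} {φ : S → Prop}
      {dec : DecidablePred φ} {C₁ : Cmd S T} {s : S} :
      ¬ φ s → Big s (.wh r hwf φ dec C₁) s [] []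

/-- The backward rewrite relation on triples `(List S, List (S → T → T), T)`,
generated by reflexivity, the pop step, and transitivity. -/
inductive Back {S T : Type*} :
    List S × List (S → T → T) × T → List S × List (S → T → T) × T → Prop
  | refl (x : List S × List (S → T → T) × T) : Back x x
  | pop (s : S) (σ : List S) (γ : S → T → T) (Γ : List (S → T → T)) (t : T) :
      Back (s :: σ, γ :: Γ, t) (σ, Γ, γ s t)
  | trans {x y z : List S × List (S → T → T) × T} :
      Back x y → Back y z → Back x z

/-!
Run forward, a command leaves on the stacks exactly the states and backward maps that
its backward denotation composes, last pushed first popped; hence popping the stacks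
computes `C⁻ s`. The proof is structural induction on the command, with an inner
well-founded induction for loops, where the descent restriction guarantees that the
guard `φ s ∧ r (C₁⁺ s) s` of the recursive definitions reduces to `φ s`.
-/

section

variable {S T : Type*}

def Unwinds (σ : List S) (Γ : List (S → T → T)) (f : T → T) : Prop :=
  ∀ (t : T) (σ₀ : List S) (Γ₀ : List (S → T → T)), Back (σ ++ σ₀, Γ ++ Γ₀, t) (σ₀, Γ₀, f t)

namespace Unwinds

theorem nil : Unwinds (S := S) [] [] (id : T → T) :=
  fun t σ₀ Γ₀ => .refl (σ₀, Γ₀, t)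

theorem singleton (s : S) (γ : S → T → T) : Unwinds [s] [γ] (γ s) :=
  fun t σ₀ Γ₀ => .pop s σ₀ γ Γ₀ t

theorem append {σ σ' : List S} {Γ Γ' : List (S → T → T)} {f g : T → T}
    (hf : Unwinds σ Γ f) (hg : Unwinds σ' Γ' g) : Unwinds (σ' ++ σ) (Γ' ++ Γ) (f ∘ g) := by
  intro t σ₀ Γ₀
  rw [List.append_assoc, List.append_assoc]
  exact (hg t (σ ++ σ₀) (Γ ++ Γ₀)).trans (hf (g t) σ₀ Γ₀)

end Unwinds

namespace Cmd

section While

variable {r : S → S → Prop} {hwf : WellFounded r} {φ : S → Prop} {dec : DecidablePred φ}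
  {C₁ : Cmd S T}

theorem fwd_wh (s : S) : (wh r hwf φ dec C₁).fwd s =
    if φ s ∧ r (C₁.fwd s) s then (wh r hwf φ dec C₁).fwd (C₁.fwd s) else s := by
  rw [fwd, hwf.fix_eq, dite_eq_ite]

theorem bwd_wh (s : S) : (wh r hwf φ dec C₁).bwd s =
    if φ s ∧ r (C₁.fwd s) s then C₁.bwd s ∘ (wh r hwf φ dec C₁).bwd (C₁.fwd s) else id := by
  rw [bwd, hwf.fix_eq]
  split_ifs <;> rfl

theorem exists_big_unwinds_wh
    (hC₁ : ∀ s, ∃ σ Γ, Big s C₁ (C₁.fwd s) σ Γ ∧ Unwinds σ Γ (C₁.bwd s))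
    (hdesc : ∀ s, φ s → r (C₁.fwd s) s) (s : S) :
    ∃ σ Γ, Big s (wh r hwf φ dec C₁) ((wh r hwf φ dec C₁).fwd s) σ Γ ∧
      Unwinds σ Γ ((wh r hwf φ dec C₁).bwd s) := by
  induction s using hwf.induction with
  | _ s ih =>
    rw [fwd_wh, bwd_wh]
    by_cases hφ : φ s
    · have hr := hdesc s hφ
      obtain ⟨σ, Γ, hbody, hbody'⟩ := hC₁ s
      obtain ⟨σ', Γ', hloop, hloop'⟩ := ih _ hr
      rw [if_pos ⟨hφ, hr⟩, if_pos ⟨hφ, hr⟩]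
      exact ⟨σ' ++ σ, Γ' ++ Γ, .wh_true hφ hbody hr hloop, hbody'.append hloop'⟩
    · rw [if_neg (hφ ·.1), if_neg (hφ ·.1)]
      exact ⟨[], [], .wh_false hφ, Unwinds.nil⟩

end While

theorem WF.exists_big_unwinds {C : Cmd S T} (hC : C.WF) (s : S) :
    ∃ σ Γ, Big s C (C.fwd s) σ Γ ∧ Unwinds σ Γ (C.bwd s) := by
  induction hC generalizing s with
  | skip => exact ⟨[], [], .skip s, Unwinds.nil⟩
  | prim c γ => exact ⟨[s], [γ], .prim s c γ, Unwinds.singleton s γ⟩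
  | seq _ _ ih₁ ih₂ =>
    obtain ⟨σ, Γ, h₁, h₁'⟩ := ih₁ s
    obtain ⟨σ', Γ', h₂, h₂'⟩ := ih₂ _
    exact ⟨σ' ++ σ, Γ' ++ Γ, .seq h₁ h₂, h₁'.append h₂'⟩
  | @cond φ _ _ _ _ _ ih₁ ih₂ =>
    by_cases hφ : φ s
    · obtain ⟨σ, Γ, h, h'⟩ := ih₁ s
      simp only [fwd, bwd, if_pos hφ]
      exact ⟨σ, Γ, .cond_true hφ h, h'⟩
    · obtain ⟨σ, Γ, h, h'⟩ := ih₂ s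
      simp only [fwd, bwd, if_neg hφ]
      exact ⟨σ, Γ, .cond_false hφ h, h'⟩
  | wh _ hdesc ih => exact exists_big_unwinds_wh ih hdesc s

end Cmd

end

/-- Soundness of the operational semantics of LOOP_D with respect to its
denotational semantics (Theorem 8). -/
theorem loopD_operational_sound {S T : Type*} (C : Cmd S T) (hC : C.WF) (s : S) :
    ∃ (s' : S) (σ : List S) (Γ : List (S → T → T)),
      Big s C s' σ Γ ∧ s' = C.fwd s ∧
      ∀ (t : T) (σ₀ : List S) (Γ₀ : List (S → T → T)),
        ∃ t' : T, Back (σ ++ σ₀, Γ ++ Γ₀, t) (σ₀, Γ₀, t') ∧ t' = C.bwd s t := by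
  obtain ⟨σ, Γ, hbig, hback⟩ := hC.exists_big_unwinds s
  exact ⟨_, σ, Γ, hbig, rfl, fun t σ₀ Γ₀ => ⟨_, hback t σ₀ Γ₀, rfl⟩⟩
end
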